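/- arXiv:1905.06019 — 3 statements merged into one kernel-verified Lean document; each statement's English description precedes it below -/
import Mathlib

section
/- If z is a smooth solution of the multi-symplectic system K·z_t + M·z_x = ∇S(z) that is L-periodic in x (together with its first derivatives), then the global energy ∫₀^L [S(z) − (1/2)⟨z, M·z_x⟩] dx is constant in time. -/
open Matrix MeasureTheory intervalIntegral

section Aux

lemma aux_dot {d : ℕ} (M : Matrix (Fin d) (Fin d) ℝ)
    {u v : ℝ → Fin d → ℝ} {u' v' : Fin d → ℝ} {t : ℝ}
    (hu : HasDerivAt u u' t) (hv : HasDerivAt v v' t) :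
    HasDerivAt (fun s => u s ⬝ᵥ (M *ᵥ v s)) (u' ⬝ᵥ (M *ᵥ v t) + u t ⬝ᵥ (M *ᵥ v')) t := by
  have hui : ∀ i, HasDerivAt (fun s => u s i) (u' i) t := hasDerivAt_pi.1 hu
  have hvi : ∀ i, HasDerivAt (fun s => v s i) (v' i) t := hasDerivAt_pi.1 hv
  have hw : ∀ i, HasDerivAt (fun s => (M *ᵥ v s) i) ((M *ᵥ v') i) t := by
    intro i
    simpa [Matrix.mulVec, dotProduct] using
      (HasDerivAt.fun_sum (fun j _ => ((hvi j).const_mul (M i j))))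
  have : HasDerivAt (fun s => ∑ i, u s i * (M *ᵥ v s) i)
      (∑ i, (u' i * (M *ᵥ v t) i + u t i * (M *ᵥ v') i)) t :=
    HasDerivAt.fun_sum (fun i _ => ((hui i).mul (hw i)))
  simpa [dotProduct, Finset.sum_add_distrib] using this

lemma skew_dot {d : ℕ} {M : Matrix (Fin d) (Fin d) ℝ} (hM : Mᵀ = -M)
    (a b : Fin d → ℝ) : b ⬝ᵥ (M *ᵥ a) = -(a ⬝ᵥ (M *ᵥ b)) := by
  rw [Matrix.dotProduct_mulVec, ← Matrix.mulVec_transpose, hM, Matrix.neg_mulVec,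
    neg_dotProduct, dotProduct_comm]

variable {d : ℕ} {f : ℝ × ℝ → (Fin d → ℝ)}

lemma hasDerivAt_slice1 (hf : Differentiable ℝ f) (x t : ℝ) :
    HasDerivAt (fun y => f (y, t)) (fderiv ℝ f (x, t) (1, 0)) x := by
  have h2 : HasDerivAt (fun y : ℝ => (y, t)) ((1 : ℝ), (0 : ℝ)) x := by
    simpa using (HasDerivAt.prodMk (hasDerivAt_id x) (hasDerivAt_const x t))
  exact ((hf (x, t)).hasFDerivAt.comp_hasDerivAt x h2)

lemma hasDerivAt_slice2 (hf : Differentiable ℝ f) (x t : ℝ) :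
    HasDerivAt (fun s => f (x, s)) (fderiv ℝ f (x, t) (0, 1)) t := by
  have h2 : HasDerivAt (fun s : ℝ => (x, s)) ((0 : ℝ), (1 : ℝ)) t := by
    simpa using (HasDerivAt.prodMk (hasDerivAt_const t x) (hasDerivAt_id t))
  exact ((hf (x, t)).hasFDerivAt.comp_hasDerivAt t h2)

lemma contDiff_partial (hf : ContDiff ℝ 2 f) (w : ℝ × ℝ) :
    ContDiff ℝ 1 (fun p => fderiv ℝ f p w) :=
  (hf.fderiv_right (le_refl 2)).clm_apply contDiff_const

lemma fderiv_partial_apply (hf : ContDiff ℝ 2 f) (q : ℝ × ℝ) (v w : ℝ × ℝ) :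
    fderiv ℝ (fun p => fderiv ℝ f p v) q w = fderiv ℝ (fderiv ℝ f) q w v := by
  have hd : DifferentiableAt ℝ (fderiv ℝ f) q :=
    ((hf.fderiv_right (le_refl 2)).differentiable one_ne_zero) q
  have h : HasFDerivAt (fun p => fderiv ℝ f p v)
      ((fderiv ℝ (fderiv ℝ f) q).flip v) q := by
    simpa using hd.hasFDerivAt.clm_apply (hasFDerivAt_const v q)
  rw [h.fderiv]; rfl

lemma symm_partial (hf : ContDiff ℝ 2 f) (q : ℝ × ℝ) (v w : ℝ × ℝ) :
    fderiv ℝ (fun p => fderiv ℝ f p v) q w = fderiv ℝ (fun p => fderiv ℝ f p w) q v := by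
  rw [fderiv_partial_apply hf, fderiv_partial_apply hf]
  exact (hf.contDiffAt.isSymmSndFDerivAt (by norm_num)) w v

lemma fderiv_periodic (hf : Differentiable ℝ f) (c : ℝ × ℝ)
    (hp : ∀ p, f (p + c) = f p) (p : ℝ × ℝ) :
    fderiv ℝ f (p + c) = fderiv ℝ f p := by
  have h1 : HasFDerivAt (fun q => f (q + c)) (fderiv ℝ f (p + c)) p := by
    have := (hf (p + c)).hasFDerivAt.comp p ((hasFDerivAt_id p).add_const c)
    simpa using this
  have h2 : HasFDerivAt f (fderiv ℝ f (p + c)) p := by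
    have : (fun q => f (q + c)) = f := funext hp
    rwa [this] at h1
  exact h2.fderiv.symm

end Aux

open Matrix

/-- For an `L`-periodic smooth solution of the multi-symplectic system
`K·z_t + M·z_x = ∇S(z)`, the global energy
`∫₀^L [S(z) − ½⟨z, M z_x⟩] dx` is constant in time. -/
theorem stmt2 {d : ℕ} (hd : 1 ≤ d)
    (K M : Matrix (Fin d) (Fin d) ℝ)
    (hK : Kᵀ = -K) (hM : Mᵀ = -M)
    (S : (Fin d → ℝ) → ℝ) (hS : ContDiff ℝ (⊤ : ℕ∞) S)
    (gradS : (Fin d → ℝ) → (Fin d → ℝ))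
    (hgrad : ∀ w v, fderiv ℝ S w v = gradS w ⬝ᵥ v)
    (z : ℝ → ℝ → Fin d → ℝ)
    (hz : ContDiff ℝ 2 (fun p : ℝ × ℝ => z p.1 p.2))
    (hpde : ∀ x t,
      K *ᵥ (deriv (fun s => z x s) t) + M *ᵥ (deriv (fun y => z y t) x)
        = gradS (z x t))
    (L : ℝ) (hL : 0 < L)
    (hper : ∀ x t, z (x + L) t = z x t) :
    ∀ t₁ t₂,
      (∫ x in (0:ℝ)..L,
        (S (z x t₁) - (1/2) * (z x t₁ ⬝ᵥ (M *ᵥ deriv (fun y => z y t₁) x))))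
      = ∫ x in (0:ℝ)..L,
        (S (z x t₂) - (1/2) * (z x t₂ ⬝ᵥ (M *ᵥ deriv (fun y => z y t₂) x))) := by
  set f : ℝ × ℝ → (Fin d → ℝ) := fun p => z p.1 p.2 with hf_def
  have hf2 : ContDiff ℝ 2 f := hz
  have hfd : Differentiable ℝ f := hf2.differentiable two_ne_zero
  set zx : ℝ × ℝ → (Fin d → ℝ) := fun p => fderiv ℝ f p (1, 0) with hzx_def
  set zt : ℝ × ℝ → (Fin d → ℝ) := fun p => fderiv ℝ f p (0, 1) with hzt_def
  have hzx1 : ContDiff ℝ 1 zx := contDiff_partial hf2 _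
  have hzt1 : ContDiff ℝ 1 zt := contDiff_partial hf2 _
  have hzxd : Differentiable ℝ zx := hzx1.differentiable one_ne_zero
  have hztd : Differentiable ℝ zt := hzt1.differentiable one_ne_zero
  -- identify the deriv's in the statement
  have hderiv_x : ∀ x t, deriv (fun y => z y t) x = zx (x, t) := fun x t =>
    (hasDerivAt_slice1 hfd x t).deriv
  have hderiv_t : ∀ x t, deriv (fun s => z x s) t = zt (x, t) := fun x t =>
    (hasDerivAt_slice2 hfd x t).deriv
  -- the integrand and its time derivative
  set G : ℝ → ℝ → ℝ := fun x t => S (f (x, t)) - (1/2) * (f (x, t) ⬝ᵥ (M *ᵥ zx (x, t)))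
    with hG_def
  set Gt : ℝ → ℝ → ℝ := fun x t =>
    fderiv ℝ S (f (x, t)) (zt (x, t)) -
      (1/2) * (zt (x, t) ⬝ᵥ (M *ᵥ zx (x, t)) +
        f (x, t) ⬝ᵥ (M *ᵥ fderiv ℝ zx (x, t) (0, 1))) with hGt_def
  set F : ℝ → ℝ → ℝ := fun x t => -((1/2) * (f (x, t) ⬝ᵥ (M *ᵥ zt (x, t)))) with hF_def
  set Fx : ℝ → ℝ → ℝ := fun x t =>
    -((1/2) * (zx (x, t) ⬝ᵥ (M *ᵥ zt (x, t)) +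
        f (x, t) ⬝ᵥ (M *ᵥ fderiv ℝ zt (x, t) (1, 0)))) with hFx_def
  have hG : ∀ x t, HasDerivAt (fun s => G x s) (Gt x t) t := by
    intro x t
    have h1 : HasDerivAt (fun s => S (f (x, s))) (fderiv ℝ S (f (x, t)) (zt (x, t))) t :=
      ((hS.differentiable (by simp) (f (x, t))).hasFDerivAt).comp_hasDerivAt t
        (hasDerivAt_slice2 hfd x t)
    have h2 : HasDerivAt (fun s => zx (x, s)) (fderiv ℝ zx (x, t) (0, 1)) t :=
      hasDerivAt_slice2 hzxd x t
    have h3 := (aux_dot M (hasDerivAt_slice2 hfd x t) h2).const_mul (1/2 : ℝ)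
    exact h1.sub h3
  have hF : ∀ x t, HasDerivAt (fun y => F y t) (Fx x t) x := by
    intro x t
    have h2 : HasDerivAt (fun y => zt (y, t)) (fderiv ℝ zt (x, t) (1, 0)) x :=
      hasDerivAt_slice1 hztd x t
    exact ((aux_dot M (hasDerivAt_slice1 hfd x t) h2).const_mul (1/2 : ℝ)).neg
  -- the key pointwise identity Gt = Fx
  have hkey : ∀ x t, Gt x t = Fx x t := by
    intro x t
    have hpde' : gradS (f (x, t)) = K *ᵥ zt (x, t) + M *ᵥ zx (x, t) := by
      rw [← hpde x t, hderiv_x, hderiv_t]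
    have hmix : fderiv ℝ zx (x, t) (0, 1) = fderiv ℝ zt (x, t) (1, 0) :=
      symm_partial hf2 (x, t) _ _
    have hSgrad : fderiv ℝ S (f (x, t)) (zt (x, t))
        = zt (x, t) ⬝ᵥ (M *ᵥ zx (x, t)) := by
      rw [hgrad, hpde', add_dotProduct]
      have h0 : (K *ᵥ zt (x, t)) ⬝ᵥ zt (x, t) = 0 := by
        have := skew_dot hK (zt (x, t)) (zt (x, t))
        have h' : zt (x, t) ⬝ᵥ (K *ᵥ zt (x, t)) = 0 := by linarith
        rw [dotProduct_comm] at h'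
        exact h'
      rw [h0, zero_add]
      exact dotProduct_comm _ _
    have hskewM : zx (x, t) ⬝ᵥ (M *ᵥ zt (x, t))
        = -(zt (x, t) ⬝ᵥ (M *ᵥ zx (x, t))) := skew_dot hM _ _
    simp only [hGt_def, hFx_def, hSgrad, hmix, hskewM]
    ring
  -- continuity of Gt (jointly)
  have hGt_cont : Continuous fun p : ℝ × ℝ => Gt p.1 p.2 := by
    have hf_cont : Continuous f := hf2.continuous
    have hzx_cont : Continuous zx := hzx1.continuous
    have hzt_cont : Continuous zt := hzt1.continuous
    have hfS : Continuous (fderiv ℝ S) :=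
      (hS.fderiv_right (m := 1) (WithTop.coe_le_coe.2 le_top)).continuous
    have h1 : Continuous fun p : ℝ × ℝ => fderiv ℝ S (f p) (zt p) :=
      (hfS.comp hf_cont).clm_apply hzt_cont
    have hzxt_cont : Continuous fun p : ℝ × ℝ => fderiv ℝ zx p (0, 1) :=
      ((hzx1.fderiv_right (m := 0) le_rfl).continuous).clm_apply continuous_const
    have h2 : Continuous fun p : ℝ × ℝ =>
        zt p ⬝ᵥ (M *ᵥ zx p) + f p ⬝ᵥ (M *ᵥ fderiv ℝ zx p (0, 1)) :=
      (hzt_cont.dotProduct (continuous_const.matrix_mulVec hzx_cont)).add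
        (hf_cont.dotProduct (continuous_const.matrix_mulVec hzxt_cont))
    exact h1.sub (continuous_const.mul h2)
  -- main computation for ordered times
  suffices key : ∀ a b : ℝ, a ≤ b →
      (∫ x in (0:ℝ)..L, G x a) = ∫ x in (0:ℝ)..L, G x b by
    intro t₁ t₂
    have hrw : ∀ t, (∫ x in (0:ℝ)..L,
        (S (z x t) - (1/2) * (z x t ⬝ᵥ (M *ᵥ deriv (fun y => z y t) x))))
        = ∫ x in (0:ℝ)..L, G x t := by
      intro t
      refine intervalIntegral.integral_congr (fun x _ => ?_)
      simp only [hG_def, hderiv_x]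
      rfl
    rw [hrw, hrw]
    rcases le_total t₁ t₂ with h | h
    · exact key t₁ t₂ h
    · exact (key t₂ t₁ h).symm
  intro a b hab
  -- G is continuous in x at fixed time
  have hG_cont : ∀ t, Continuous fun x => G x t := by
    intro t
    have : Continuous fun p : ℝ × ℝ => G p.1 p.2 := by
      have hf_cont : Continuous f := hf2.continuous
      exact ((hS.continuous).comp hf_cont).sub
        (continuous_const.mul (hf_cont.dotProduct
          (continuous_const.matrix_mulVec hzx1.continuous)))
    exact this.comp (continuous_id.prodMk continuous_const)
  -- FTC in time
  have hFTC_t : ∀ x, (∫ t in a..b, Gt x t) = G x b - G x a := by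
    intro x
    refine intervalIntegral.integral_eq_sub_of_hasDerivAt (fun t _ => hG x t) ?_
    exact (hGt_cont.comp (continuous_const.prodMk continuous_id)).intervalIntegrable a b
  -- FTC in space: for each t the inner integral vanishes
  have hinner : ∀ t, (∫ x in (0:ℝ)..L, Gt x t) = 0 := by
    intro t
    have hcongr : (∫ x in (0:ℝ)..L, Gt x t) = ∫ x in (0:ℝ)..L, Fx x t :=
      intervalIntegral.integral_congr (fun x _ => hkey x t)
    have hFx_cont : Continuous fun x => Fx x t := by
      have : Continuous fun p : ℝ × ℝ => Fx p.1 p.2 := by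
        have : (fun p : ℝ × ℝ => Fx p.1 p.2) = fun p : ℝ × ℝ => Gt p.1 p.2 := by
          funext p; exact (hkey p.1 p.2).symm
        rw [this]; exact hGt_cont
      exact this.comp (continuous_id.prodMk continuous_const)
    have hFTC_x : (∫ x in (0:ℝ)..L, Fx x t) = F L t - F 0 t :=
      intervalIntegral.integral_eq_sub_of_hasDerivAt (fun x _ => hF x t)
        (hFx_cont.intervalIntegrable 0 L)
    have hperF : F L t = F 0 t := by
      have hper_f : ∀ p : ℝ × ℝ, f (p + (L, 0)) = f p := by
        intro p
        show z (p.1 + L) (p.2 + 0) = z p.1 p.2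
        rw [add_zero, hper]
      have hper_zt : zt (L, t) = zt (0, t) := by
        have := fderiv_periodic hfd (L, 0) hper_f (0, t)
        have he : ((0 : ℝ), t) + (L, 0) = ((L : ℝ), t) := by
          simp [Prod.ext_iff]
        rw [he] at this
        simp only [hzt_def, this]
      have hper_z : f (L, t) = f (0, t) := by
        have := hper_f (0, t)
        have he : ((0 : ℝ), t) + (L, 0) = ((L : ℝ), t) := by
          simp [Prod.ext_iff]
        rwa [he] at this
      simp only [hF_def, hper_zt, hper_z]
    rw [hcongr, hFTC_x, hperF, sub_self]
  -- Fubini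
  have hswap : (∫ x in (0:ℝ)..L, (∫ t in a..b, Gt x t))
      = ∫ t in a..b, (∫ x in (0:ℝ)..L, Gt x t) := by
    have hint : Integrable (Function.uncurry Gt)
        ((volume.restrict (Set.Ioc (0:ℝ) L)).prod (volume.restrict (Set.Ioc a b))) := by
      rw [Measure.prod_restrict]
      have hcompact : IsCompact (Set.Icc (0:ℝ) L ×ˢ Set.Icc a b) :=
        isCompact_Icc.prod isCompact_Icc
      have hIcc : IntegrableOn (Function.uncurry Gt)
          (Set.Icc (0:ℝ) L ×ˢ Set.Icc a b) (volume.prod volume) := by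
        have : Continuous (Function.uncurry Gt) := hGt_cont
        rw [← Measure.volume_eq_prod]
        exact this.continuousOn.integrableOn_compact hcompact
      exact hIcc.mono_set (Set.prod_mono Set.Ioc_subset_Icc_self Set.Ioc_subset_Icc_self)
    rw [intervalIntegral.integral_of_le hL.le, intervalIntegral.integral_of_le hab]
    simp_rw [intervalIntegral.integral_of_le hab, intervalIntegral.integral_of_le hL.le]
    exact MeasureTheory.integral_integral_swap hint
  -- put everything together
  have hGint : ∀ t, IntervalIntegrable (fun x => G x t) volume 0 L := fun t =>
    (hG_cont t).intervalIntegrable 0 L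
  have : (∫ x in (0:ℝ)..L, G x b) - ∫ x in (0:ℝ)..L, G x a
      = ∫ x in (0:ℝ)..L, (G x b - G x a) :=
    (intervalIntegral.integral_sub (hGint b) (hGint a)).symm
  have hzero : (∫ x in (0:ℝ)..L, (G x b - G x a)) = 0 := by
    have h1 : (∫ x in (0:ℝ)..L, (G x b - G x a))
        = ∫ x in (0:ℝ)..L, (∫ t in a..b, Gt x t) :=
      intervalIntegral.integral_congr (fun x _ => (hFTC_t x).symm)
    rw [h1, hswap]
    simp only [hinner]
    simp
  linarith [this, hzero]
end

section
/- If K is skew-symmetric and z_h : ℝ → ℝ^{dN} solves the semi-discrete system (I_N ⊗ K)·(d/dt)z_h + (D_h ⊗ M)·z_h = ∇S̃_h(z_h) with D_h skew-symmetric and M skew-symmetric, then the semi-discrete energy E_h(t) = S̃_h(z_h(t)) − (1/2)⟨z_h(t), (D_h ⊗ M)·z_h(t)⟩ is constant in time. -/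
open Matrix
open scoped Kronecker

theorem skew_dot' {n : Type*} [Fintype n] (B : Matrix n n ℝ) (hB : Bᵀ = -B) (v : n → ℝ) :
    (B *ᵥ v) ⬝ᵥ v = 0 := by
  have h1 : (B *ᵥ v) ⬝ᵥ v = v ⬝ᵥ (Bᵀ *ᵥ v) := by
    rw [dotProduct_comm, dotProduct_mulVec, ← mulVec_transpose, dotProduct_comm]
  have h2 : v ⬝ᵥ (Bᵀ *ᵥ v) = -(v ⬝ᵥ (B *ᵥ v)) := by rw [hB, neg_mulVec, dotProduct_neg]
  have h3 : v ⬝ᵥ (B *ᵥ v) = (B *ᵥ v) ⬝ᵥ v := dotProduct_comm _ _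
  linarith [h1, h2, h3]

theorem symm_dot' {n : Type*} [Fintype n] (A : Matrix n n ℝ) (hA : Aᵀ = A) (u v : n → ℝ) :
    u ⬝ᵥ (A *ᵥ v) = v ⬝ᵥ (A *ᵥ u) := by
  rw [dotProduct_mulVec, ← mulVec_transpose, hA, dotProduct_comm]

/-- Semi-discrete energy conservation: if `D_h`, `K`, `M` are skew-symmetric and
`(I_N ⊗ K) ż_h + (D_h ⊗ M) z_h = ∇S̃_h(z_h)`, then
`E_h(t) = S̃_h(z_h) − ½⟨z_h, (D_h ⊗ M) z_h⟩` is constant in time. -/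
theorem stmt9 (N d : ℕ) (hN : 1 ≤ N) (hd : 1 ≤ d)
    (K M : Matrix (Fin d) (Fin d) ℝ)
    (hK : Kᵀ = -K) (hM : Mᵀ = -M)
    (Dh : Matrix (Fin N) (Fin N) ℝ) (hDh : Dhᵀ = -Dh)
    (S : (Fin d → ℝ) → ℝ) (hS : ContDiff ℝ (⊤ : ℕ∞) S)
    (gradS : (Fin d → ℝ) → (Fin d → ℝ))
    (hgrad : ∀ w v, fderiv ℝ S w v = gradS w ⬝ᵥ v)
    (zh : ℝ → (Fin N × Fin d → ℝ)) (hzh : Differentiable ℝ zh)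
    (hode : ∀ t,
      ((1 : Matrix (Fin N) (Fin N) ℝ) ⊗ₖ K) *ᵥ (deriv zh t)
        + (Dh ⊗ₖ M) *ᵥ (zh t)
      = fun p => gradS (fun i => zh t (p.1, i)) p.2) :
    ∀ t s,
      ((∑ j : Fin N, S (fun i => zh t (j, i)))
          - (1/2) * (zh t ⬝ᵥ ((Dh ⊗ₖ M) *ᵥ zh t)))
      = ((∑ j : Fin N, S (fun i => zh s (j, i)))
          - (1/2) * (zh s ⬝ᵥ ((Dh ⊗ₖ M) *ᵥ zh s))) := by
  set A := Dh ⊗ₖ M with hAdef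
  have hA : Aᵀ = A := by
    ext ⟨i1, i2⟩ ⟨j1, j2⟩
    simp only [hAdef, transpose_apply, kroneckerMap_apply]
    have e1 : Dh j1 i1 = -Dh i1 j1 := by
      have := congrFun (congrFun hDh i1) j1; simpa [transpose_apply] using this
    have e2 : M j2 i2 = -M i2 j2 := by
      have := congrFun (congrFun hM i2) j2; simpa [transpose_apply] using this
    rw [e1, e2]; ring
  have hB : ((1 : Matrix (Fin N) (Fin N) ℝ) ⊗ₖ K)ᵀ
      = -((1 : Matrix (Fin N) (Fin N) ℝ) ⊗ₖ K) := by
    ext ⟨i1, i2⟩ ⟨j1, j2⟩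
    simp only [transpose_apply, kroneckerMap_apply, Matrix.neg_apply]
    have e2 : K j2 i2 = -K i2 j2 := by
      have := congrFun (congrFun hK i2) j2; simpa [transpose_apply] using this
    rw [e2, Matrix.one_apply, Matrix.one_apply]
    by_cases h : i1 = j1 <;> simp [h, eq_comm]
  have key : ∀ τ, HasDerivAt
      (fun u => (∑ j : Fin N, S (fun i => zh u (j, i)))
        - (1/2) * (zh u ⬝ᵥ (A *ᵥ zh u))) 0 τ := by
    intro τ
    have hz' : HasDerivAt zh (deriv zh τ) τ := (hzh τ).hasDerivAt
    have hzp : ∀ p, HasDerivAt (fun u => zh u p) (deriv zh τ p) τ :=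
      fun p => hasDerivAt_pi.mp hz' p
    have hSj : ∀ j : Fin N, HasDerivAt (fun u => S (fun i => zh u (j, i)))
        (gradS (fun i => zh τ (j, i)) ⬝ᵥ (fun i => deriv zh τ (j, i))) τ := by
      intro j
      have hzj : HasDerivAt (fun u => (fun i => zh u (j, i)))
          (fun i => deriv zh τ (j, i)) τ := hasDerivAt_pi.mpr (fun i => hzp (j, i))
      have hdS : HasFDerivAt S (fderiv ℝ S (fun i => zh τ (j, i))) (fun i => zh τ (j, i)) :=
        (hS.differentiable (by simp) _).hasFDerivAt
      have h := hdS.comp_hasDerivAt τ hzj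
      rw [hgrad] at h
      exact h
    have hAzp : ∀ p, HasDerivAt (fun u => (A *ᵥ zh u) p) ((A *ᵥ deriv zh τ) p) τ := by
      intro p
      have := HasDerivAt.fun_sum (fun q (_ : q ∈ Finset.univ) => (hzp q).const_mul (A p q))
      simpa [mulVec, dotProduct] using this
    have hquad : HasDerivAt (fun u => zh u ⬝ᵥ (A *ᵥ zh u))
        (deriv zh τ ⬝ᵥ (A *ᵥ zh τ) + zh τ ⬝ᵥ (A *ᵥ deriv zh τ)) τ := by
      have := HasDerivAt.fun_sum (fun p (_ : p ∈ Finset.univ) => (hzp p).mul (hAzp p))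
      simpa [dotProduct, Finset.sum_add_distrib] using this
    have hE := (HasDerivAt.fun_sum (fun j (_ : j ∈ Finset.univ) => hSj j)).sub
        (hquad.const_mul (1/2 : ℝ))
    have hderiv0 : (∑ j : Fin N,
          gradS (fun i => zh τ (j, i)) ⬝ᵥ (fun i => deriv zh τ (j, i)))
        - (1/2) * (deriv zh τ ⬝ᵥ (A *ᵥ zh τ) + zh τ ⬝ᵥ (A *ᵥ deriv zh τ)) = 0 := by
      have hsum : (∑ j : Fin N,
            gradS (fun i => zh τ (j, i)) ⬝ᵥ (fun i => deriv zh τ (j, i)))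
          = (fun p : Fin N × Fin d => gradS (fun i => zh τ (p.1, i)) p.2) ⬝ᵥ deriv zh τ := by
        simp [dotProduct, Fintype.sum_prod_type]
      rw [hsum, ← hode τ, add_dotProduct, skew_dot' _ hB (deriv zh τ)]
      have h1 : (A *ᵥ zh τ) ⬝ᵥ deriv zh τ = deriv zh τ ⬝ᵥ (A *ᵥ zh τ) := dotProduct_comm _ _
      have h2 : zh τ ⬝ᵥ (A *ᵥ deriv zh τ) = deriv zh τ ⬝ᵥ (A *ᵥ zh τ) := symm_dot' A hA _ _
      rw [h1, h2]; ring
    exact hderiv0 ▸ hE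
  exact is_const_of_deriv_eq_zero (fun τ => (key τ).differentiableAt)
    (fun τ => (key τ).deriv)
end

section
/- If D_h is skew-symmetric and U, V : ℝ → ℝ^{dN} solve the variational (linearized) equation (I_N ⊗ K)·Ẇ + (D_h ⊗ M)·W = S''(z_h(t))·W along a solution z_h, then the total discrete symplectic form Σ_{j=0}^{N−1} ⟨K·U_j(t), V_j(t)⟩ is constant in time. -/
/-!
Write the variational equation as `A ẇ = G(t) w` with `A = I_N ⊗ K` skew and
`G(t) = H(t) - D_h ⊗ M` symmetric (a Kronecker product of two skew matrices is symmetric).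
The total symplectic form is `(A U) ⬝ᵥ V`, whose derivative is
`(A U̇) ⬝ᵥ V - (A V̇) ⬝ᵥ U = (G U) ⬝ᵥ V - (G V) ⬝ᵥ U = 0`.
-/

open Matrix
open scoped Kronecker

namespace Matrix

section Algebra

variable {ι κ l m R : Type*}

theorem neg_kronecker [Mul R] [HasDistribNeg R] (A : Matrix ι κ R) (B : Matrix l m R) :
    (-A) ⊗ₖ B = -(A ⊗ₖ B) := by
  ext p q
  simp [kroneckerMap_apply]

theorem kronecker_neg [Mul R] [HasDistribNeg R] (A : Matrix ι κ R) (B : Matrix l m R) :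
    A ⊗ₖ (-B) = -(A ⊗ₖ B) := by
  ext p q
  simp [kroneckerMap_apply]

theorem mulVec_dotProduct_swap_of_transpose_eq_neg [Fintype ι] [CommRing R]
    {A : Matrix ι ι R} (hA : Aᵀ = -A) (x y : ι → R) :
    (A *ᵥ x) ⬝ᵥ y = -((A *ᵥ y) ⬝ᵥ x) := by
  rw [dotProduct_comm, dotProduct_mulVec, ← mulVec_transpose, hA, neg_mulVec,
    neg_dotProduct]

theorem mulVec_dotProduct_swap_of_transpose_eq_self [Fintype ι] [CommSemiring R]
    {A : Matrix ι ι R} (hA : Aᵀ = A) (x y : ι → R) :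
    (A *ᵥ x) ⬝ᵥ y = (A *ᵥ y) ⬝ᵥ x := by
  rw [dotProduct_comm, dotProduct_mulVec, ← mulVec_transpose, hA]

theorem transpose_eq_self_of_apply_eq_ite [Zero R] [DecidableEq ι]
    {B : ι → Matrix κ κ R} (hB : ∀ j, (B j)ᵀ = B j) {H : Matrix (ι × κ) (ι × κ) R}
    (hH : ∀ p q, H p q = if p.1 = q.1 then B p.1 p.2 q.2 else 0) : Hᵀ = H := by
  ext p q
  rw [transpose_apply, hH, hH]
  rcases eq_or_ne p.1 q.1 with h | h
  · rw [if_pos h.symm, if_pos h, h, ← transpose_apply (B q.1), hB]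
  · rw [if_neg (Ne.symm h), if_neg h]

theorem one_kronecker_mulVec_dotProduct [Fintype ι] [Fintype κ] [CommSemiring R] [DecidableEq ι]
    (K : Matrix κ κ R) (x y : ι × κ → R) :
    ((1 : Matrix ι ι R) ⊗ₖ K) *ᵥ x ⬝ᵥ y
      = ∑ j, (K *ᵥ fun i => x (j, i)) ⬝ᵥ fun i => y (j, i) := by
  simp only [dotProduct, mulVec, Fintype.sum_prod_type, kroneckerMap_apply, one_apply,
    ite_mul, one_mul, zero_mul]
  simp only [Finset.sum_comm (γ := ι), Finset.sum_ite_eq, Finset.mem_univ, if_true]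

end Algebra

section Calculus

variable {ι : Type*} [Fintype ι] {f g : ℝ → ι → ℝ} {f' g' : ι → ℝ} {t : ℝ}

theorem _root_.HasDerivAt.dotProduct (hf : HasDerivAt f f' t) (hg : HasDerivAt g g' t) :
    HasDerivAt (fun t => f t ⬝ᵥ g t) (f' ⬝ᵥ g t + f t ⬝ᵥ g') t := by
  simpa only [_root_.dotProduct, ← Finset.sum_add_distrib] using
    HasDerivAt.fun_sum fun i _ => (hasDerivAt_pi.mp hf i).fun_mul (hasDerivAt_pi.mp hg i)

theorem _root_.HasDerivAt.const_mulVec (A : Matrix ι ι ℝ) (hf : HasDerivAt f f' t) :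
    HasDerivAt (fun t => A *ᵥ f t) (A *ᵥ f') t :=
  (mulVecLin A).toContinuousLinearMap.hasFDerivAt.comp_hasDerivAt t hf

theorem mulVec_dotProduct_eq_of_deriv_eq {A : Matrix ι ι ℝ} (hA : Aᵀ = -A)
    {G : ℝ → Matrix ι ι ℝ} (hG : ∀ t, (G t)ᵀ = G t) {U V : ℝ → ι → ℝ}
    (hU : Differentiable ℝ U) (hV : Differentiable ℝ V)
    (hUeq : ∀ t, A *ᵥ deriv U t = G t *ᵥ U t) (hVeq : ∀ t, A *ᵥ deriv V t = G t *ᵥ V t)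
    (t s : ℝ) : (A *ᵥ U t) ⬝ᵥ V t = (A *ᵥ U s) ⬝ᵥ V s := by
  have hderiv : ∀ t, HasDerivAt (fun t => (A *ᵥ U t) ⬝ᵥ V t) 0 t := by
    intro t
    have hzero : (A *ᵥ deriv U t) ⬝ᵥ V t + (A *ᵥ U t) ⬝ᵥ deriv V t = 0 := by
      rw [mulVec_dotProduct_swap_of_transpose_eq_neg hA (U t), hUeq, hVeq,
        mulVec_dotProduct_swap_of_transpose_eq_self (hG t) (V t), add_neg_cancel]
    simpa only [hzero] using
      ((hU t).hasDerivAt.const_mulVec A).dotProduct (hV t).hasDerivAt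
  exact is_const_of_deriv_eq_zero (fun t => (hderiv t).differentiableAt)
    (fun t => (hderiv t).deriv) t s

end Calculus

end Matrix

theorem stmt11_general (N d : ℕ)
    (K M : Matrix (Fin d) (Fin d) ℝ)
    (hK : Kᵀ = -K) (hM : Mᵀ = -M)
    (Dh : Matrix (Fin N) (Fin N) ℝ) (hDh : Dhᵀ = -Dh)
    (B : ℝ → Fin N → Matrix (Fin d) (Fin d) ℝ)
    (hB : ∀ t j, (B t j)ᵀ = B t j)
    (H : ℝ → Matrix (Fin N × Fin d) (Fin N × Fin d) ℝ)
    (hH : ∀ t p q, H t p q = if p.1 = q.1 then B t p.1 p.2 q.2 else 0)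
    (U V : ℝ → (Fin N × Fin d → ℝ))
    (hU : Differentiable ℝ U) (hV : Differentiable ℝ V)
    (hUeq : ∀ t,
      ((1 : Matrix (Fin N) (Fin N) ℝ) ⊗ₖ K) *ᵥ (deriv U t)
        + (Dh ⊗ₖ M) *ᵥ (U t) = H t *ᵥ U t)
    (hVeq : ∀ t,
      ((1 : Matrix (Fin N) (Fin N) ℝ) ⊗ₖ K) *ᵥ (deriv V t)
        + (Dh ⊗ₖ M) *ᵥ (V t) = H t *ᵥ V t) :
    ∀ t s,
      (∑ j : Fin N, (K *ᵥ fun i => U t (j, i)) ⬝ᵥ (fun i => V t (j, i)))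
      = ∑ j : Fin N, (K *ᵥ fun i => U s (j, i)) ⬝ᵥ (fun i => V s (j, i)) := by
  intro t s
  have hA : ((1 : Matrix (Fin N) (Fin N) ℝ) ⊗ₖ K)ᵀ
      = -((1 : Matrix (Fin N) (Fin N) ℝ) ⊗ₖ K) := by
    rw [← kroneckerMap_transpose, transpose_one, hK, kronecker_neg]
  have hG : ∀ t, (H t - Dh ⊗ₖ M)ᵀ = H t - Dh ⊗ₖ M := fun t => by
    rw [transpose_sub, transpose_eq_self_of_apply_eq_ite (hB t) (hH t),
      ← kroneckerMap_transpose, hDh, hM, neg_kronecker, kronecker_neg, neg_neg]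
  rw [← one_kronecker_mulVec_dotProduct, ← one_kronecker_mulVec_dotProduct]
  exact mulVec_dotProduct_eq_of_deriv_eq hA hG hU hV
    (fun t => by rw [sub_mulVec, eq_sub_iff_add_eq]; exact hUeq t)
    (fun t => by rw [sub_mulVec, eq_sub_iff_add_eq]; exact hVeq t) t s

/-- Preservation of total discrete symplecticity: if `U`, `V` solve the
variational equation `(I_N ⊗ K) Ẇ + (D_h ⊗ M) W = H(t) W` with `D_h`
skew-symmetric and `H(t)` block-diagonal with symmetric blocks, then
`Σ_j ⟨K U_j(t), V_j(t)⟩` is constant in time. -/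
theorem stmt11 (N d : ℕ) (hN : 1 ≤ N) (hd : 1 ≤ d)
    (K M : Matrix (Fin d) (Fin d) ℝ)
    (hK : Kᵀ = -K) (hM : Mᵀ = -M)
    (Dh : Matrix (Fin N) (Fin N) ℝ) (hDh : Dhᵀ = -Dh)
    (B : ℝ → Fin N → Matrix (Fin d) (Fin d) ℝ)
    (hB : ∀ t j, (B t j)ᵀ = B t j)
    (H : ℝ → Matrix (Fin N × Fin d) (Fin N × Fin d) ℝ)
    (hH : ∀ t p q, H t p q = if p.1 = q.1 then B t p.1 p.2 q.2 else 0)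
    (U V : ℝ → (Fin N × Fin d → ℝ))
    (hU : Differentiable ℝ U) (hV : Differentiable ℝ V)
    (hUeq : ∀ t,
      ((1 : Matrix (Fin N) (Fin N) ℝ) ⊗ₖ K) *ᵥ (deriv U t)
        + (Dh ⊗ₖ M) *ᵥ (U t) = H t *ᵥ U t)
    (hVeq : ∀ t,
      ((1 : Matrix (Fin N) (Fin N) ℝ) ⊗ₖ K) *ᵥ (deriv V t)
        + (Dh ⊗ₖ M) *ᵥ (V t) = H t *ᵥ V t) :
    ∀ t s,
      (∑ j : Fin N, (K *ᵥ fun i => U t (j, i)) ⬝ᵥ (fun i => V t (j, i)))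
      = ∑ j : Fin N, (K *ᵥ fun i => U s (j, i)) ⬝ᵥ (fun i => V s (j, i)) :=
  stmt11_general N d K M hK hM Dh hDh B hB H hH U V hU hV hUeq hVeq
end
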